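/- arXiv:1608.08156 — 2 statements merged into one kernel-verified Lean document; each statement's English description precedes it below -/
import Mathlib

section
/- Let K be an infinite perfect field of characteristic p > 0, S = K[x,y,z,w], and set f ∈ S by F_*f = F_*((xyz)^{p-1}) · [ x·F_*(w^{p-1}) + y^{p-1}z·F_*(w^{p-2}) + y^{p-2}z^2·F_*(w^{p-3}) + ... + y z^{p-1} ], i.e., f = (xyz)^{p-1} · ( x^p w^{p-1} + (y^{p-1}z)^p w^{p-2} + ... + (yz^{p-1})^p ). Then the ideal τ(f) := Φ(F_*(f·S)) equals ⟨x, y^{p-1}z, y^{p-2}z^2, ..., y z^{p-1}⟩. -/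
open MvPolynomial

/-- For `F_*S` free over `S = K[x_1,…,x_n]` with basis `{F_*(x^α) : α ∈ {0,…,p-1}^n}`,
`frobCoeff p α f` is the coefficient `s_α ∈ S` in the expansion
`F_*f = Σ_α s_α • F_*(x^α)`, i.e. `f = Σ_α s_α^p x^α`. -/
noncomputable def frobCoeff {K : Type*} [Field K] (p : ℕ) [Fact p.Prime] [ExpChar K p]
    [PerfectRing K p] {n : ℕ} (α : Fin n → ℕ) (f : MvPolynomial (Fin n) K) :
    MvPolynomial (Fin n) K :=
  ∑ d ∈ f.support,
    if ∀ i, d i % p = α i then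
      monomial (Finsupp.mapRange (· / p) (Nat.zero_div p) d)
        ((frobeniusEquiv K p).symm (f.coeff d))
    else 0

/-- The generating trace map `Φ : F_*S → S`, the `S`-linear projection onto the
coefficient of `F_*(x_1^(p-1) ⋯ x_n^(p-1))`. -/
noncomputable def phi {K : Type*} [Field K] (p : ℕ) [Fact p.Prime] [ExpChar K p]
    [PerfectRing K p] {n : ℕ} (f : MvPolynomial (Fin n) K) : MvPolynomial (Fin n) K :=
  frobCoeff p (fun _ => p - 1) f

/-- The ideal `Φ(F_*(f•S)) = {Φ(F_*(f•h)) : h ∈ S}`, which computes the test ideal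
`τ(S, f^(1/p))`. -/
noncomputable def tauP {K : Type*} [Field K] (p : ℕ) [Fact p.Prime] [ExpChar K p]
    [PerfectRing K p] {n : ℕ} (f : MvPolynomial (Fin n) K) : Ideal (MvPolynomial (Fin n) K) :=
  Ideal.span {g | ∃ h, g = phi p (f * h)}

/-- The polynomials `f_(p-1) = x`, `f_j = y^(j+1) z^(p-1-j)` for `j < p-1` (so
`f_(p-1-i) = y^(p-i) z^i`), in `S = K[x,y,z,w]` with `x = X 0`, `y = X 1`, `z = X 2`,
`w = X 3`. -/
noncomputable def fCoeff {K : Type*} [Field K] (p j : ℕ) : MvPolynomial (Fin 4) K :=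
  if j = p - 1 then X 0 else X 1 ^ (j + 1) * X 2 ^ (p - 1 - j)

/-- The 4-dimensional example
`f = (xyz)^(p-1) ( x^p w^(p-1) + (y^(p-1)z)^p w^(p-2) + … + (yz^(p-1))^p )`,
i.e. `F_*f = F_*((xyz)^(p-1))·[x F_*(w^(p-1)) + y^(p-1)z F_*(w^(p-2)) + … + yz^(p-1)]`. -/
noncomputable def fDim4 {K : Type*} [Field K] (p : ℕ) : MvPolynomial (Fin 4) K :=
  (X 0 * X 1 * X 2) ^ (p - 1) * ∑ j ∈ Finset.range p, fCoeff p j ^ p * X 3 ^ j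

/-! `Φ` is `p^{-1}`-linear, `Φ(F_*(s^p g)) = s Φ(F_*g)`, so writing
`f h = Σ_j f_j^p · (xyz)^(p-1) w^j h` gives `Φ(F_*(f h)) = Σ_j f_j Φ(F_*((xyz)^(p-1) w^j h))`,
which lies in `⟨f_0, …, f_(p-1)⟩`. Conversely `Φ(F_*((xyz)^(p-1) w^m))` is `w^(m/p)` when
`m ≡ -1 mod p` and `0` otherwise; for `h = w^(p-1-j)` the exponents are `m = i + p - 1 - j` with
`i, j < p`, and only `i = j` survives, so `Φ(F_*(f w^(p-1-j))) = f_j`. -/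

section TraceMap

variable {K : Type*} [Field K] (p : ℕ) [ExpChar K p] [PerfectRing K p] {n : ℕ}

noncomputable def phiTerm (d : Fin n →₀ ℕ) (c : K) : MvPolynomial (Fin n) K :=
  if ∀ i, d i % p = p - 1 then
    monomial (Finsupp.mapRange (· / p) (Nat.zero_div p) d) ((frobeniusEquiv K p).symm c)
  else 0

theorem phiTerm_zero (d : Fin n →₀ ℕ) : phiTerm p d (0 : K) = 0 := by
  simp [phiTerm]

variable [Fact p.Prime]

theorem phi_eq_sum (f : MvPolynomial (Fin n) K) :
    phi p f = (AddMonoidAlgebra.coeff f).sum (phiTerm p) :=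
  rfl

theorem phi_monomial (d : Fin n →₀ ℕ) (c : K) : phi p (monomial d c) = phiTerm p d c :=
  Finsupp.sum_single_index (phiTerm_zero p d)

theorem phi_add (f g : MvPolynomial (Fin n) K) : phi p (f + g) = phi p f + phi p g := by
  rw [phi_eq_sum, phi_eq_sum, phi_eq_sum, AddMonoidAlgebra.coeff_add]
  refine Finsupp.sum_add_index' (phiTerm_zero p) fun d c₁ c₂ => ?_
  simp only [phiTerm, map_add]
  split_ifs <;> simp

noncomputable def phiAddHom : MvPolynomial (Fin n) K →+ MvPolynomial (Fin n) K where
  toFun := phi p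
  map_zero' := Finsupp.sum_zero_index
  map_add' := phi_add p

theorem phi_sum {ι : Type*} (s : Finset ι) (f : ι → MvPolynomial (Fin n) K) :
    phi p (∑ i ∈ s, f i) = ∑ i ∈ s, phi p (f i) :=
  map_sum (phiAddHom p) f s

theorem phi_monomial_pow_mul_monomial (d e : Fin n →₀ ℕ) (c c' : K) :
    phi p (monomial d c ^ p * monomial e c') = monomial d c * phi p (monomial e c') := by
  have hp := (Fact.out : p.Prime).pos
  rw [monomial_pow, monomial_mul, phi_monomial, phi_monomial, phiTerm, phiTerm]
  simp only [Finsupp.add_apply, Finsupp.smul_apply, smul_eq_mul, Nat.mul_add_mod]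
  split_ifs
  · rw [monomial_mul]
    congr 2
    · ext i
      simp [Nat.mul_add_div hp]
    · rw [map_mul, frobeniusEquiv_symm_pow]
  · rw [mul_zero]

theorem phi_pow_mul (s g : MvPolynomial (Fin n) K) : phi p (s ^ p * g) = s * phi p g := by
  induction g using MvPolynomial.induction_on' with
  | monomial e c' =>
    induction s using MvPolynomial.induction_on' with
    | monomial d c => exact phi_monomial_pow_mul_monomial p d e c c'
    | add s₁ s₂ h₁ h₂ => rw [add_pow_expChar, add_mul, phi_add, h₁, h₂, add_mul]
  | add g₁ g₂ h₁ h₂ => rw [mul_add, phi_add, phi_add, h₁, h₂, mul_add]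

end TraceMap

section Example

variable {K : Type*} [Field K] (p : ℕ) [Fact p.Prime] [ExpChar K p] [PerfectRing K p]

theorem phi_fDim4_mul (h : MvPolynomial (Fin 4) K) :
    phi p (fDim4 p * h) =
      ∑ j ∈ Finset.range p, fCoeff p j * phi p ((X 0 * X 1 * X 2) ^ (p - 1) * X 3 ^ j * h) := by
  rw [fDim4, Finset.mul_sum, Finset.sum_mul, phi_sum]
  refine Finset.sum_congr rfl fun j _ => ?_
  rw [← phi_pow_mul]
  ring_nf

theorem phi_X012_mul_X3_pow (m : ℕ) :
    phi p ((X 0 * X 1 * X 2) ^ (p - 1) * X 3 ^ m : MvPolynomial (Fin 4) K) =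
      if m % p = p - 1 then X 3 ^ (m / p) else 0 := by
  have hlt : p - 1 < p := Nat.sub_lt (Fact.out : p.Prime).pos one_pos
  set d : Fin 4 →₀ ℕ := Finsupp.single 0 (p - 1) + Finsupp.single 1 (p - 1) +
    Finsupp.single 2 (p - 1) + Finsupp.single 3 m
  have hmono : ((X 0 * X 1 * X 2) ^ (p - 1) * X 3 ^ m : MvPolynomial (Fin 4) K) =
      monomial d 1 := by
    simp only [d, mul_pow, X_pow_eq_monomial, monomial_mul, one_mul]
  have hcond : (∀ i, d i % p = p - 1) ↔ m % p = p - 1 := by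
    simp [d, Fin.forall_fin_succ, Nat.mod_eq_of_lt hlt]
  have hdiv : Finsupp.mapRange (· / p) (Nat.zero_div p) d = Finsupp.single 3 (m / p) := by
    ext i
    fin_cases i <;> simp [d, Nat.div_eq_of_lt hlt]
  rw [hmono, phi_monomial, phiTerm, map_one, hdiv, ← X_pow_eq_monomial]
  exact if_congr hcond rfl rfl

theorem phi_fDim4_mul_X3_pow {j : ℕ} (hj : j < p) :
    phi p (fDim4 p * X 3 ^ (p - 1 - j)) = (fCoeff p j : MvPolynomial (Fin 4) K) := by
  rw [phi_fDim4_mul, Finset.sum_eq_single j]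
  · rw [mul_assoc, ← pow_add, phi_X012_mul_X3_pow, show j + (p - 1 - j) = p - 1 by omega,
      Nat.mod_eq_of_lt (by omega), Nat.div_eq_of_lt (by omega), if_pos rfl, pow_zero, mul_one]
  · intro i hi hij
    rw [mul_assoc, ← pow_add, phi_X012_mul_X3_pow, if_neg, mul_zero]
    intro hmod
    refine hij (Nat.ModEq.eq_of_lt_of_lt (Nat.ModEq.add_right_cancel' (p - 1 - j) ?_)
      (Finset.mem_range.mp hi) hj)
    rw [Nat.ModEq, hmod, show j + (p - 1 - j) = p - 1 by omega, Nat.mod_eq_of_lt (by omega)]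
  · exact fun hj' => absurd (Finset.mem_range.mpr hj) hj'

end Example

theorem statement3_general {K : Type*} [Field K] (p : ℕ) [Fact p.Prime] [ExpChar K p]
    [PerfectRing K p] :
    tauP p (fDim4 (K := K) p) =
      Ideal.span (Set.range fun j : Fin p => fCoeff (K := K) p j) := by
  apply le_antisymm
  · refine Ideal.span_le.mpr ?_
    rintro g ⟨h, rfl⟩
    rw [phi_fDim4_mul]
    exact Ideal.sum_mem _ fun j hj =>
      Ideal.mul_mem_right _ _ (Ideal.subset_span ⟨⟨j, Finset.mem_range.mp hj⟩, rfl⟩)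
  · refine Ideal.span_le.mpr ?_
    rintro g ⟨j, rfl⟩
    exact Ideal.subset_span ⟨X 3 ^ (p - 1 - (j : ℕ)), (phi_fDim4_mul_X3_pow p j.isLt).symm⟩

/-- for the 4-dimensional example `f`, the test ideal
`τ(f) = Φ(F_*(f·S))` equals `⟨x, y^(p-1)z, y^(p-2)z^2, …, yz^(p-1)⟩`. -/
theorem statement3 {K : Type*} [Field K] [Infinite K] (p : ℕ) [Fact p.Prime] [ExpChar K p]
    [PerfectRing K p] :
    tauP p (fDim4 (K := K) p) =
      Ideal.span (Set.range fun j : Fin p => fCoeff (K := K) p j) :=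
  statement3_general p
end

section
/- Let K be a perfect field of characteristic p > 0, S = K[x_1,...,x_n], and R = K[x_1,...,x_{n-1}] ≅ S/(l) for a polynomial l = c_0^p + c_1^p x_1 + ... + c_n^p x_n with c_n ≠ 0, via x_n ↦ -c_n^{-p}(c_0^p + c_1^p x_1 + ... + c_{n-1}^p x_{n-1}). If f = Σ_{i=0}^{p-1} f_i^p · (x_1...x_{n-1})^{p-1} x_n^i with f_i ∈ R homogeneous of degree d, then the coefficient of F_*(x_1^{p-1}...x_{n-1}^{p-1}) in the expansion of F_*f̄ with respect to the monomial basis {F_*(x_1^{a_1}...x_{n-1}^{a_{n-1}}) : 0 ≤ a_j ≤ p-1} of F_*R over R equals Σ_{i=0}^{p-1} (-c_0 c_n^{-1})^i f_i. -/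
open MvPolynomial

/-- The identification `S/(l) ≅ R = K[x_1,…,x_(n-1)]` for
`l = c₀^p + c₁^p x_1 + … + c_n^p x_n` with `c_n ≠ 0`: the algebra map `S → R` fixing
`x_1, …, x_(n-1)` and sending `x_n ↦ -c_n^(-p)(c₀^p + c₁^p x_1 + … + c_(n-1)^p x_(n-1))`.
Here `S` has `m+1` variables and `R` has `m` variables. -/
noncomputable def substHom {K : Type*} [Field K] (p m : ℕ) (c0 : K) (c : Fin (m + 1) → K) :
    MvPolynomial (Fin (m + 1)) K →ₐ[K] MvPolynomial (Fin m) K :=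
  aeval fun i : Fin (m + 1) =>
    if h : (i : ℕ) < m then X ⟨i, h⟩
    else -C ((c (Fin.last m))⁻¹ ^ p) *
      (C (c0 ^ p) + ∑ j : Fin m, C (c (Fin.castSucc j) ^ p) * X j)

/-- The polynomial `f` with `F_*f = Σ_(i=0)^(p-1) f_i F_*((x_1⋯x_(n-1))^(p-1) x_n^i)`,
i.e. `f = Σ_i f_i^p (x_1⋯x_(n-1))^(p-1) x_n^i`, for `f_i ∈ K[x_1,…,x_(n-1)]`. -/
noncomputable def fGen {K : Type*} [Field K] (p m : ℕ)
    (fi : ℕ → MvPolynomial (Fin m) K) : MvPolynomial (Fin (m + 1)) K :=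
  ∑ i ∈ Finset.range p, (rename Fin.castSucc (fi i)) ^ p *
    (∏ j : Fin m, X (Fin.castSucc j)) ^ (p - 1) * X (Fin.last m) ^ i

set_option linter.unusedSectionVars false
set_option linter.unusedVariables false

section Aux

variable {K : Type*} [Field K] {p : ℕ} [Fact p.Prime] [ExpChar K p] [PerfectRing K p] {n : ℕ}

/-- one term of `frobCoeff`. -/
noncomputable def frobTerm (α : Fin n → ℕ) (d : Fin n →₀ ℕ) (a : K) : MvPolynomial (Fin n) K :=
  if ∀ i, d i % p = α i then
    monomial (Finsupp.mapRange (· / p) (Nat.zero_div p) d) ((frobeniusEquiv K p).symm a)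
  else 0

lemma frobTerm_zero (α : Fin n → ℕ) (d : Fin n →₀ ℕ) : frobTerm (p := p) α d (0 : K) = 0 := by
  unfold frobTerm; split <;> simp

lemma frobTerm_add (α : Fin n → ℕ) (d : Fin n →₀ ℕ) (a b : K) :
    frobTerm (p := p) α d (a + b) = frobTerm (p := p) α d a + frobTerm (p := p) α d b := by
  unfold frobTerm; split <;> simp

lemma frobCoeff_def' (α : Fin n → ℕ) (f : MvPolynomial (Fin n) K) :
    frobCoeff p α f = ∑ d ∈ f.support, frobTerm (p := p) α d (f.coeff d) := rfl

lemma frobCoeff_eq_sum (α : Fin n → ℕ) (f : MvPolynomial (Fin n) K) {s : Finset (Fin n →₀ ℕ)}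
    (hs : f.support ⊆ s) :
    frobCoeff p α f = ∑ d ∈ s, frobTerm (p := p) α d (f.coeff d) := by
  rw [frobCoeff_def']
  exact Finset.sum_subset hs fun d _ hd => by
    rw [MvPolynomial.notMem_support_iff.mp hd, frobTerm_zero]

lemma frobCoeff_zero (α : Fin n → ℕ) : frobCoeff p α (0 : MvPolynomial (Fin n) K) = 0 := by
  simp [frobCoeff]

lemma frobCoeff_add (α : Fin n → ℕ) (f g : MvPolynomial (Fin n) K) :
    frobCoeff p α (f + g) = frobCoeff p α f + frobCoeff p α g := by
  classical
  have hf : f.support ⊆ f.support ∪ g.support ∪ (f + g).support := by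
    intro x hx; exact Finset.mem_union_left _ (Finset.mem_union_left _ hx)
  have hg : g.support ⊆ f.support ∪ g.support ∪ (f + g).support := by
    intro x hx; exact Finset.mem_union_left _ (Finset.mem_union_right _ hx)
  have hfg : (f + g).support ⊆ f.support ∪ g.support ∪ (f + g).support := by
    intro x hx; exact Finset.mem_union_right _ hx
  rw [frobCoeff_eq_sum α (f + g) hfg, frobCoeff_eq_sum α f hf, frobCoeff_eq_sum α g hg,
    ← Finset.sum_add_distrib]
  exact Finset.sum_congr rfl fun d _ => by rw [coeff_add, frobTerm_add]

/-- `frobCoeff` as an additive monoid hom. -/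
noncomputable def frobCoeffHom (p : ℕ) [Fact p.Prime] [ExpChar K p] [PerfectRing K p]
    (α : Fin n → ℕ) : MvPolynomial (Fin n) K →+ MvPolynomial (Fin n) K where
  toFun := frobCoeff p α
  map_zero' := frobCoeff_zero α
  map_add' := frobCoeff_add α

lemma frobCoeff_monomial (α : Fin n → ℕ) (d : Fin n →₀ ℕ) (a : K) :
    frobCoeff p α (monomial d a) = frobTerm (p := p) α d a := by
  rw [frobCoeff_eq_sum α _ support_monomial_subset, Finset.sum_singleton]
  simp [coeff_monomial]

lemma frobCoeff_eq_zero (α : Fin n → ℕ) (f : MvPolynomial (Fin n) K)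
    (h : ∀ d ∈ f.support, ¬ ∀ i, d i % p = α i) : frobCoeff p α f = 0 := by
  rw [frobCoeff_def']
  exact Finset.sum_eq_zero fun d hd => by unfold frobTerm; rw [if_neg (h d hd)]

lemma frobCoeff_monomial_pow_mul (α : Fin n → ℕ) (d e : Fin n →₀ ℕ) (a b : K) :
    frobCoeff p α ((monomial d a) ^ p * monomial e b)
      = monomial d a * frobCoeff p α (monomial e b) := by
  rw [monomial_pow, monomial_mul, frobCoeff_monomial, frobCoeff_monomial]
  unfold frobTerm
  have hcond : (∀ i, (p • d + e) i % p = α i) ↔ (∀ i, e i % p = α i) := by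
    apply forall_congr'
    intro i
    rw [Finsupp.add_apply, Finsupp.smul_apply, smul_eq_mul, Nat.mul_add_mod]
  split_ifs with h1 h2 h2
  · have hd : Finsupp.mapRange (· / p) (Nat.zero_div p) (p • d + e)
        = d + Finsupp.mapRange (· / p) (Nat.zero_div p) e := by
      ext i
      rw [Finsupp.mapRange_apply, Finsupp.add_apply, Finsupp.smul_apply, smul_eq_mul,
        Nat.mul_add_div (Fact.out : p.Prime).pos, Finsupp.add_apply, Finsupp.mapRange_apply]
    have ha : (frobeniusEquiv K p).symm (a ^ p * b)
        = a * (frobeniusEquiv K p).symm b := by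
      rw [map_mul]
      congr 1
      rw [← frobenius_def, frobeniusEquiv_symm_apply_frobenius]
    rw [hd, ha, monomial_mul]
  · exact absurd (hcond.mp h1) h2
  · exact absurd (hcond.mpr h2) h1
  · rw [mul_zero]

lemma frobCoeff_sum {ι : Type*} (α : Fin n → ℕ) (s : Finset ι) (f : ι → MvPolynomial (Fin n) K) :
    frobCoeff p α (∑ i ∈ s, f i) = ∑ i ∈ s, frobCoeff p α (f i) :=
  map_sum (frobCoeffHom (K := K) (n := n) p α) f s

lemma frobCoeff_monomial_pow_mul' (α : Fin n → ℕ) (v : Fin n →₀ ℕ) (a : K)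
    (f : MvPolynomial (Fin n) K) :
    frobCoeff p α ((monomial v a) ^ p * f) = monomial v a * frobCoeff p α f := by
  conv_lhs => rw [f.as_sum, Finset.mul_sum]
  rw [frobCoeff_sum]
  rw [Finset.sum_congr rfl fun e (_ : e ∈ f.support) => frobCoeff_monomial_pow_mul α v e _ _]
  rw [← Finset.mul_sum, ← frobCoeff_sum, ← f.as_sum]

lemma frobCoeff_nsmul (α : Fin n → ℕ) (c : ℕ) (f : MvPolynomial (Fin n) K) :
    frobCoeff p α (c • f) = c • frobCoeff p α f :=
  map_nsmul (frobCoeffHom (K := K) (n := n) p α) c f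

lemma frobCoeff_pow_mul (α : Fin n → ℕ) (g f : MvPolynomial (Fin n) K) :
    frobCoeff p α (g ^ p * f) = g * frobCoeff p α f := by
  haveI : CharP K p := by
    rcases ‹ExpChar K p› with _ | h
    · exact absurd (Fact.out : Nat.Prime 1) Nat.not_prime_one
    · assumption
  conv_lhs => rw [g.as_sum, sum_pow_char, Finset.sum_mul]
  rw [frobCoeff_sum]
  rw [Finset.sum_congr rfl fun v (_ : v ∈ g.support) => frobCoeff_monomial_pow_mul' α v _ f]
  rw [← Finset.sum_mul, ← g.as_sum]

lemma frobCoeff_prodX :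
    frobCoeff p (fun _ => p - 1) ((∏ j : Fin n, X j : MvPolynomial (Fin n) K) ^ (p - 1)) = 1 := by
  have hp1 : p - 1 < p := Nat.sub_lt (Fact.out : p.Prime).pos one_pos
  set e : Fin n →₀ ℕ := Finsupp.equivFunOnFinite.symm (fun _ => p - 1) with he
  have hei : ∀ i, e i = p - 1 := fun i => rfl
  have hsupp : e.support = Finset.univ := by
    ext i
    simp only [Finsupp.mem_support_iff, Finset.mem_univ, iff_true, hei]
    exact Nat.sub_ne_zero_of_lt (Fact.out : p.Prime).one_lt
  have hM : ((∏ j : Fin n, X j : MvPolynomial (Fin n) K) ^ (p - 1)) = monomial e 1 := by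
    rw [← prod_X_pow_eq_monomial, hsupp, ← Finset.prod_pow]
    exact Finset.prod_congr rfl fun j _ => by rw [hei]
  rw [hM, frobCoeff_monomial]
  unfold frobTerm
  rw [if_pos fun i => by rw [hei, Nat.mod_eq_of_lt hp1]]
  have h0 : Finsupp.mapRange (· / p) (Nat.zero_div p) e = 0 := by
    ext i
    rw [Finsupp.mapRange_apply, hei, Nat.div_eq_of_lt hp1, Finsupp.coe_zero, Pi.zero_apply]
  rw [h0, map_one, monomial_zero']
  exact C_1

lemma frobCoeff_M_E_pow (B : Fin n → K) {k : ℕ} (hk1 : 1 ≤ k) (hk2 : k ≤ p - 1) :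
    frobCoeff p (fun _ => p - 1)
      ((∏ j : Fin n, X j : MvPolynomial (Fin n) K) ^ (p - 1)
        * (∑ j : Fin n, C (B j) * X j) ^ k) = 0 := by
  classical
  have hp1 : p - 1 < p := Nat.sub_lt (Fact.out : p.Prime).pos one_pos
  apply frobCoeff_eq_zero
  intro d hd hcond
  set e : Fin n →₀ ℕ := Finsupp.equivFunOnFinite.symm (fun _ => p - 1) with he
  have hei : ∀ i, e i = p - 1 := fun i => rfl
  have hsupp : e.support = Finset.univ := by
    ext i
    simp only [Finsupp.mem_support_iff, Finset.mem_univ, iff_true, hei]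
    exact Nat.sub_ne_zero_of_lt (Fact.out : p.Prime).one_lt
  have hM : ((∏ j : Fin n, X j : MvPolynomial (Fin n) K) ^ (p - 1)) = monomial e 1 := by
    rw [← prod_X_pow_eq_monomial, hsupp, ← Finset.prod_pow]
    exact Finset.prod_congr rfl fun j _ => by rw [hei]
  rw [hM] at hd
  have hsub := MvPolynomial.support_mul _ _ hd
  rw [Finset.mem_add] at hsub
  obtain ⟨e', he', d', hd', rfl⟩ := hsub
  have he'e : e' = e := by
    have := support_monomial_subset he'
    simpa using this
  subst he'e
  -- E^k is homogeneous of degree k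
  have hE : ((∑ j : Fin n, C (B j) * X j : MvPolynomial (Fin n) K)).IsHomogeneous 1 :=
    IsHomogeneous.sum _ _ _ fun j _ => (isHomogeneous_X K j).C_mul (B j)
  have hEk : ((∑ j : Fin n, C (B j) * X j : MvPolynomial (Fin n) K) ^ k).IsHomogeneous k := by
    simpa using hE.pow k
  have hdeg : d'.degree = k := by
    rw [Finsupp.degree_eq_weight_one]
    exact hEk (MvPolynomial.mem_support_iff.mp hd')
  have hle : ∀ i, d' i ≤ p - 1 := fun i =>
    le_trans (le_trans (Finsupp.le_degree i d') hdeg.le) hk2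
  have hp2 : 2 ≤ p := (Fact.out : p.Prime).two_le
  have hzero : ∀ i, d' i = 0 := by
    intro i
    by_contra hne
    have h1 : 1 ≤ d' i := Nat.one_le_iff_ne_zero.mpr hne
    have hi' := hle i
    have := hcond i
    rw [Finsupp.add_apply, hei] at this
    have heq : p - 1 + d' i = (d' i - 1) + p := by omega
    rw [heq, Nat.add_mod_right, Nat.mod_eq_of_lt (by omega : d' i - 1 < p)] at this
    omega
  have : d' = 0 := Finsupp.ext fun i => hzero i
  rw [this, map_zero] at hdeg
  omega

lemma frobCoeff_M_L_pow (a : K) (B : Fin n → K) {i : ℕ} (hi : i < p) :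
    frobCoeff p (fun _ => p - 1)
      ((∏ j : Fin n, X j : MvPolynomial (Fin n) K) ^ (p - 1)
        * (C (a ^ p) + ∑ j : Fin n, C (B j) * X j) ^ i) = C a ^ i := by
  have hp2 : 2 ≤ p := (Fact.out : p.Prime).two_le
  rw [C_pow, add_pow, Finset.mul_sum, frobCoeff_sum]
  rw [Finset.sum_eq_single i
    (fun k hk hki => by
      have hk' : k < i := lt_of_le_of_ne (Nat.lt_succ_iff.mp (Finset.mem_range.mp hk)) hki
      have h1 : 1 ≤ i - k := by omega
      have h2 : i - k ≤ p - 1 := by omega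
      rw [show (∏ j : Fin n, X j : MvPolynomial (Fin n) K) ^ (p - 1)
            * ((C a ^ p) ^ k * (∑ j : Fin n, C (B j) * X j) ^ (i - k) * (i.choose k : MvPolynomial (Fin n) K))
          = (i.choose k) • (((C a) ^ k) ^ p
            * ((∏ j : Fin n, X j : MvPolynomial (Fin n) K) ^ (p - 1)
              * (∑ j : Fin n, C (B j) * X j) ^ (i - k))) from by
        rw [nsmul_eq_mul]; ring]
      rw [frobCoeff_nsmul, frobCoeff_pow_mul, frobCoeff_M_E_pow B h1 h2, mul_zero, smul_zero])
    (fun hmem => absurd (Finset.mem_range.mpr (Nat.lt_succ_self i)) hmem)]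
  rw [show (∏ j : Fin n, X j : MvPolynomial (Fin n) K) ^ (p - 1)
        * ((C a ^ p) ^ i * (∑ j : Fin n, C (B j) * X j) ^ (i - i) * (i.choose i : MvPolynomial (Fin n) K))
      = ((C a) ^ i) ^ p * ((∏ j : Fin n, X j : MvPolynomial (Fin n) K) ^ (p - 1)) from by
    rw [Nat.sub_self, Nat.choose_self, pow_zero, Nat.cast_one]; ring]
  rw [frobCoeff_pow_mul, frobCoeff_prodX, mul_one]

end Aux


section Subst

variable {K : Type*} [Field K] {p m : ℕ}

lemma substHom_X_castSucc [Field K] (c0 : K) (c : Fin (m + 1) → K) (j : Fin m) :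
    substHom p m c0 c (X (Fin.castSucc j)) = X j := by
  simp [substHom]

lemma substHom_rename (c0 : K) (c : Fin (m + 1) → K) (q : MvPolynomial (Fin m) K) :
    substHom p m c0 c (rename Fin.castSucc q) = q := by
  simp only [substHom, aeval_rename, Function.comp_def, Fin.coe_castSucc, Fin.is_lt, dite_true,
    Fin.eta]
  exact aeval_X_left_apply q

end Subst


/-- with `f = Σ_i f_i^p (x_1⋯x_(n-1))^(p-1) x_n^i`, `f_i` homogeneous of
degree `d`, the coefficient of `F_*(x_1^(p-1)⋯x_(n-1)^(p-1))` in the expansion of `F_*f̄`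
(where `f̄` is the image of `f` under the identification `S/(l) ≅ K[x_1,…,x_(n-1)]`)
equals `Σ_(i=0)^(p-1) (-c₀ c_n^(-1))^i f_i`. -/
theorem statement11 {K : Type*} [Field K] (p m : ℕ) [Fact p.Prime] [ExpChar K p]
    [PerfectRing K p] (d : ℕ) (fi : ℕ → MvPolynomial (Fin m) K)
    (hhom : ∀ i < p, (fi i).IsHomogeneous d)
    (c0 : K) (c : Fin (m + 1) → K) (hcn : c (Fin.last m) ≠ 0) :
    frobCoeff p (fun _ => p - 1) (substHom p m c0 c (fGen p m fi)) =
      ∑ i ∈ Finset.range p, C (-(c0 * (c (Fin.last m))⁻¹)) ^ i * fi i := by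
  classical
  set a : K := -(c0 * (c (Fin.last m))⁻¹) with ha
  set B : Fin m → K := fun j => -((c (Fin.last m))⁻¹ ^ p * c (Fin.castSucc j) ^ p) with hB
  have hap : a ^ p = -((c (Fin.last m))⁻¹ ^ p * c0 ^ p) := by
    rw [ha, neg_pow, neg_one_pow_expChar, mul_pow, neg_one_mul, mul_comm (c0 ^ p)]
  have hL : substHom p m c0 c (X (Fin.last m))
      = C (a ^ p) + ∑ j : Fin m, C (B j) * X j := by
    rw [substHom, aeval_X, dif_neg (by simp : ¬ ((Fin.last m : Fin (m + 1)) : ℕ) < m)]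
    rw [neg_mul, mul_add, Finset.mul_sum, neg_add]
    congr 1
    · rw [← C_mul, ← C_neg]
      exact congrArg C hap.symm
    · rw [← Finset.sum_neg_distrib]
      refine Finset.sum_congr rfl fun j _ => ?_
      rw [← mul_assoc, ← C_mul, ← neg_mul, ← C_neg]
  have hsub : substHom p m c0 c (fGen p m fi)
      = ∑ i ∈ Finset.range p, (fi i) ^ p
        * ((∏ j : Fin m, X j) ^ (p - 1)
          * (C (a ^ p) + ∑ j : Fin m, C (B j) * X j) ^ i) := by
    rw [fGen, map_sum]
    refine Finset.sum_congr rfl fun i _ => ?_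
    have hprod : substHom p m c0 c (∏ j : Fin m, X (Fin.castSucc j)) = ∏ j : Fin m, X j := by
      rw [map_prod]
      exact Finset.prod_congr rfl fun j _ => substHom_X_castSucc c0 c j
    rw [map_mul, map_mul, map_pow, map_pow, map_pow, substHom_rename, hL, hprod, mul_assoc]
  rw [hsub, frobCoeff_sum]
  refine Finset.sum_congr rfl fun i hi => ?_
  rw [frobCoeff_pow_mul, frobCoeff_M_L_pow a B (Finset.mem_range.mp hi), mul_comm]
end
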